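/- Potential-function bounds for the Hedge weights: let η > 0, T ≥ 1, and let θ_1,…,θ_T be an arbitrary sequence in Θ. Then (a) Σ_{i=1}^I w_{i,T} ≤ I·exp(−η·Σ_{t=1}^T Σ_{i=1}^I p_{i,t}·R(i,θ_t) + (η²/2)·Σ_{t=1}^T Σ_{i=1}^I p_{i,t}·R(i,θ_t)²), and (b) for every i ∈ {1,…,I}, Σ_{j=1}^I w_{j,T} ≥ exp(−η·Σ_{t=1}^T R(i,θ_t)). -/

import Mathlib

/-!
Unrolling the recursion gives `w n i = exp (-η Σ_{t ≤ n} R(i, θ_t))`, so (b) is one term of the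
nonnegative sum `Σ_j w n j`. For (a), the total weight satisfies
`W_{t+1} = W_t · Σ_i p_{i,t+1} e^{-η r_i}`, and on `x ≥ 0` the bound `e^{-x} ≤ 1 - x + x²/2`,
averaged over `p` and followed by `1 + y ≤ e^y`, gives
`Σ_i p_i e^{-η r_i} ≤ exp (-η Σ_i p_i r_i + η²/2 Σ_i p_i r_i²)`; multiply these over `t` from
`W_0 = I`.
-/

open Finset

theorem Real.exp_neg_le_one_sub_add_sq_div_two {x : ℝ} (hx : 0 ≤ x) :
    Real.exp (-x) ≤ 1 - x + x ^ 2 / 2 := by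
  have hquad : 1 + x + x ^ 2 / 2 ≤ Real.exp x := Real.quadratic_le_exp_of_nonneg hx
  have hpos : 0 < 1 - x + x ^ 2 / 2 := by nlinarith [sq_nonneg (x - 1)]
  rw [Real.exp_neg, inv_le_iff_one_le_mul₀ (Real.exp_pos x)]
  -- `(1 - x + x²/2) (1 + x + x²/2) = 1 + x⁴/4`
  calc 1 ≤ (1 - x + x ^ 2 / 2) * (1 + x + x ^ 2 / 2) := by nlinarith [pow_two_nonneg (x ^ 2)]
    _ ≤ (1 - x + x ^ 2 / 2) * Real.exp x := by gcongr

theorem sum_mul_exp_neg_le {ι : Type*} [Fintype ι] {q r : ι → ℝ} {η : ℝ} (hη : 0 ≤ η)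
    (hq : ∀ i, 0 ≤ q i) (hq_sum : ∑ i, q i ≤ 1) (hr : ∀ i, 0 ≤ r i) :
    ∑ i, q i * Real.exp (-η * r i)
      ≤ Real.exp (-η * ∑ i, q i * r i + η ^ 2 / 2 * ∑ i, q i * r i ^ 2) := by
  set A := ∑ i, q i * r i
  set B := ∑ i, q i * r i ^ 2
  calc ∑ i, q i * Real.exp (-η * r i)
      ≤ ∑ i, q i * (1 - η * r i + (η * r i) ^ 2 / 2) := by
        gcongr with i
        · exact hq i
        · rw [neg_mul]
          exact Real.exp_neg_le_one_sub_add_sq_div_two (mul_nonneg hη (hr i))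
    _ = ∑ i, q i - η * A + η ^ 2 / 2 * B := by
        simp only [A, B, mul_sum, ← sum_sub_distrib, ← sum_add_distrib]
        exact sum_congr rfl fun i _ => by ring
    _ ≤ -η * A + η ^ 2 / 2 * B + 1 := by linarith
    _ ≤ Real.exp (-η * A + η ^ 2 / 2 * B) := Real.add_one_le_exp _

theorem mul_div_sum_self {ι : Type*} [Fintype ι] {w : ι → ℝ} (hw : ∀ i, 0 ≤ w i) (i : ι) :
    (∑ j, w j) * (w i / ∑ j, w j) = w i := by
  rcases eq_or_ne (∑ j, w j) 0 with hW | hW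
  · rw [(sum_eq_zero_iff_of_nonneg fun j _ => hw j).1 hW i (mem_univ i), zero_div, mul_zero]
  · exact mul_div_cancel₀ _ hW

namespace Hedge

variable {ι : Type*} {η : ℝ} {ℓ w p : ℕ → ι → ℝ}

theorem weight_eq_exp (hw0 : ∀ i, w 0 i = 1)
    (hw : ∀ t i, w (t + 1) i = w t i * Real.exp (-η * ℓ (t + 1) i)) (n : ℕ) (i : ι) :
    w n i = Real.exp (-η * ∑ t ∈ Icc 1 n, ℓ t i) := by
  induction n with
  | zero => simp [hw0]
  | succ n ih =>
    rw [hw, ih, sum_Icc_succ_top (Nat.le_add_left 1 n), ← Real.exp_add, mul_add]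

theorem sum_weight_succ_le [Fintype ι] (hη : 0 ≤ η) (hℓ : ∀ t i, 0 ≤ ℓ t i) (hw0 : ∀ i, w 0 i = 1)
    (hw : ∀ t i, w (t + 1) i = w t i * Real.exp (-η * ℓ (t + 1) i))
    (hp : ∀ t i, p (t + 1) i = w t i / ∑ j, w t j) (n : ℕ) :
    ∑ i, w (n + 1) i ≤ (∑ i, w n i) * Real.exp (-η * ∑ i, p (n + 1) i * ℓ (n + 1) i
      + η ^ 2 / 2 * ∑ i, p (n + 1) i * ℓ (n + 1) i ^ 2) := by
  have hw_nonneg : ∀ i, 0 ≤ w n i := fun i =>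
    (weight_eq_exp hw0 hw n i).symm ▸ (Real.exp_pos _).le
  have hp_nonneg : ∀ i, 0 ≤ p (n + 1) i := fun i =>
    hp n i ▸ div_nonneg (hw_nonneg i) (sum_nonneg fun j _ => hw_nonneg j)
  have hp_sum : ∑ i, p (n + 1) i ≤ 1 := by
    simp only [hp, ← sum_div]
    exact div_self_le_one _
  have hsplit : ∑ i, w (n + 1) i
      = (∑ i, w n i) * ∑ i, p (n + 1) i * Real.exp (-η * ℓ (n + 1) i) := by
    simp only [hw, hp, mul_sum, ← mul_assoc, mul_div_sum_self hw_nonneg]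
  rw [hsplit]
  exact mul_le_mul_of_nonneg_left (sum_mul_exp_neg_le hη hp_nonneg hp_sum (hℓ (n + 1)))
    (sum_nonneg fun j _ => hw_nonneg j)

theorem sum_weight_le [Fintype ι] (hη : 0 ≤ η) (hℓ : ∀ t i, 0 ≤ ℓ t i) (hw0 : ∀ i, w 0 i = 1)
    (hw : ∀ t i, w (t + 1) i = w t i * Real.exp (-η * ℓ (t + 1) i))
    (hp : ∀ t i, p (t + 1) i = w t i / ∑ j, w t j) (n : ℕ) :
    ∑ i, w n i ≤ Fintype.card ι * Real.exp (-η * ∑ t ∈ Icc 1 n, ∑ i, p t i * ℓ t i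
      + η ^ 2 / 2 * ∑ t ∈ Icc 1 n, ∑ i, p t i * ℓ t i ^ 2) := by
  induction n with
  | zero => simp [hw0]
  | succ n ih =>
    calc ∑ i, w (n + 1) i
        ≤ (∑ i, w n i) * Real.exp (-η * ∑ i, p (n + 1) i * ℓ (n + 1) i
            + η ^ 2 / 2 * ∑ i, p (n + 1) i * ℓ (n + 1) i ^ 2) :=
          sum_weight_succ_le hη hℓ hw0 hw hp n
      _ ≤ _ := mul_le_mul_of_nonneg_right ih (Real.exp_pos _).le
      _ = _ := by
          rw [sum_Icc_succ_top (Nat.le_add_left 1 n), sum_Icc_succ_top (Nat.le_add_left 1 n),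
            mul_assoc, ← Real.exp_add]
          ring_nf

theorem exp_neg_sum_le_sum_weight [Fintype ι] (hw0 : ∀ i, w 0 i = 1)
    (hw : ∀ t i, w (t + 1) i = w t i * Real.exp (-η * ℓ (t + 1) i)) (n : ℕ) (i : ι) :
    Real.exp (-η * ∑ t ∈ Icc 1 n, ℓ t i) ≤ ∑ j, w n j := by
  rw [← weight_eq_exp hw0 hw n i]
  exact single_le_sum (fun j _ => (weight_eq_exp hw0 hw n j).symm ▸ (Real.exp_pos _).le)
    (mem_univ i)

end Hedge

theorem hedge_potential_bounds_general
    (I : ℕ) (Θ : Type*) (M : ℝ)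
    (R : Fin I → Θ → ℝ) (hR : ∀ i θ, 0 ≤ R i θ ∧ R i θ ≤ M)
    (η : ℝ) (hη : 0 < η) (T : ℕ)
    (θ : ℕ → Θ) (w : ℕ → Fin I → ℝ) (p : ℕ → Fin I → ℝ)
    (hw0 : ∀ i, w 0 i = 1)
    (hw : ∀ t i, w (t + 1) i = w t i * Real.exp (-η * R i (θ (t + 1))))
    (hp : ∀ t i, p (t + 1) i = w t i / ∑ j, w t j) :
    (∑ i, w T i
      ≤ (I : ℝ) * Real.exp
          (-η * ∑ t ∈ Finset.Icc 1 T, ∑ i, p t i * R i (θ t)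
            + (η ^ 2 / 2) * ∑ t ∈ Finset.Icc 1 T, ∑ i, p t i * R i (θ t) ^ 2))
    ∧ ∀ i, Real.exp (-η * ∑ t ∈ Finset.Icc 1 T, R i (θ t)) ≤ ∑ j, w T j := by
  have hloss : ∀ t i, 0 ≤ R i (θ t) := fun t i => (hR i (θ t)).1
  refine ⟨?_, Hedge.exp_neg_sum_le_sum_weight (ℓ := fun t i => R i (θ t)) hw0 hw T⟩
  simpa only [Fintype.card_fin] using
    Hedge.sum_weight_le (ℓ := fun t i => R i (θ t)) hη.le hloss hw0 hw hp T

/-- Potential-function bounds for the Hedge weights: for any `η > 0`, `T ≥ 1`,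
and any sequence `θ_1,…,θ_T`,
(a) `Σ_i w_{i,T} ≤ I · exp(−η Σ_t Σ_i p_{i,t} R(i,θ_t) + (η²/2) Σ_t Σ_i p_{i,t} R(i,θ_t)²)`,
and (b) `Σ_j w_{j,T} ≥ exp(−η Σ_t R(i,θ_t))` for every `i`. -/
theorem hedge_potential_bounds
    (I : ℕ) (hI : 0 < I) (Θ : Type*) [Nonempty Θ] (M : ℝ) (hM : 0 < M)
    (R : Fin I → Θ → ℝ) (hR : ∀ i θ, 0 ≤ R i θ ∧ R i θ ≤ M)
    (η : ℝ) (hη : 0 < η) (T : ℕ) (hT : 1 ≤ T)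
    (θ : ℕ → Θ) (w : ℕ → Fin I → ℝ) (p : ℕ → Fin I → ℝ)
    (hw0 : ∀ i, w 0 i = 1)
    (hw : ∀ t i, w (t + 1) i = w t i * Real.exp (-η * R i (θ (t + 1))))
    (hp : ∀ t i, p (t + 1) i = w t i / ∑ j, w t j) :
    (∑ i, w T i
      ≤ (I : ℝ) * Real.exp
          (-η * ∑ t ∈ Finset.Icc 1 T, ∑ i, p t i * R i (θ t)
            + (η ^ 2 / 2) * ∑ t ∈ Finset.Icc 1 T, ∑ i, p t i * R i (θ t) ^ 2))
    ∧ ∀ i, Real.exp (-η * ∑ t ∈ Finset.Icc 1 T, R i (θ t)) ≤ ∑ j, w T j :=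
  hedge_potential_bounds_general I Θ M R hR η hη T θ w p hw0 hw hp
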